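/- Let F₂ be the free group on x and y and let k ≥ 2 be even. Define βₛ = x^{s-1}(xy³)x^{s-1} for 1 ≤ s ≤ k, β_{k+1} = y⁻¹ x^{k-1}(xy³)x^{k-1} x, and β_{k+t} = (y⁻¹x⁻¹)^{t-1} y⁻¹ x^{k} y³ x^{k} (xy)^{t-1} for t ≥ 2. Then for any n ≥ k the elements β₁, ..., βₙ form a free basis of a free subgroup of F₂ of rank n. -/

import Mathlib

/-!
Statement 16: for even `k ≥ 2` define `βₛ = x^{s-1}(xy³)x^{s-1}` for `1 ≤ s ≤ k`,
`β_{k+1} = y⁻¹ x^{k-1}(xy³)x^{k-1} x`, and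
`β_{k+t} = (y⁻¹x⁻¹)^{t-1} y⁻¹ x^k y³ x^k (xy)^{t-1}` for `t ≥ 2`.
Then for any `n ≥ k` the elements `β₁, …, βₙ` form a free basis of a free subgroup of
`F₂` of rank `n`.  Expressed via injectivity of the lift `FreeGroup (Fin n) →* F₂`,
index `i ↦ s = i + 1`.
-/

namespace Stmt16

abbrev F2 := FreeGroup (Fin 2)

def x : F2 := FreeGroup.of 0
def y : F2 := FreeGroup.of 1

def β (k s : ℕ) : F2 :=
  if s ≤ k then x ^ (s - 1) * (x * y ^ 3) * x ^ (s - 1)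
  else if s = k + 1 then y⁻¹ * x ^ (k - 1) * (x * y ^ 3) * x ^ (k - 1) * x
  else (y⁻¹ * x⁻¹) ^ (s - k - 1) * y⁻¹ * x ^ k * y ^ 3 * x ^ k * (x * y) ^ (s - k - 1)

end Stmt16

/-!
Ping-pong on reduced words. The reduced word of each `βₛ` has the form `uₛ mₛ vₛ⁻¹`, where
the `2n` words `uₛ, vₛ` form a prefix code: none of them is a prefix of another, as a decoding
function reading `(sign, s)` off the first letters of a word shows. If a reduced word `w` does
not begin with `vₛ`, the cancellation in `βₛ w` cannot consume all of `vₛ⁻¹`, so `βₛ w` begins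
with `uₛ`; likewise `βₛ⁻¹ w` begins with `vₛ` unless `w` begins with `uₛ`. The ping-pong lemma,
applied to the sets of words beginning with `uₛ` and with `vₛ`, gives freeness.
-/

universe u

namespace FreeGroup

variable {α : Type u} [DecidableEq α]

theorem toWord_eq_of_eq_mk {g : FreeGroup α} {L : List (α × Bool)} (hg : g = mk L)
    (hL : IsReduced L) : g.toWord = L := by
  rw [hg, toWord_mk, hL.reduce_eq]

theorem exists_reduce_append_eq {p q : List (α × Bool)} (hp : IsReduced p)
    (hq : IsReduced q) :
    ∃ p₁ p₂ q₂, p = p₁ ++ p₂ ∧ q = invRev p₂ ++ q₂ ∧ reduce (p ++ q) = p₁ ++ q₂ := by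
  induction p with
  | nil => exact ⟨[], [], q, rfl, by simp, by simpa using hq.reduce_eq⟩
  | cons c p ih =>
    obtain ⟨p₁, p₂, q₂, rfl, rfl, hred⟩ := ih hp.tail
    have hcons := reduce.cons (L := p₁ ++ p₂ ++ (invRev p₂ ++ q₂)) c
    rw [hred] at hcons
    rcases p₁ with _ | ⟨d, p₁⟩
    · rcases q₂ with _ | ⟨d, q₂⟩
      · exact ⟨[c], p₂, [], rfl, rfl, by simpa using hcons⟩
      · by_cases hcd : c.1 = d.1 ∧ c.2 = !d.2
        · refine ⟨[], c :: p₂, q₂, rfl, ?_, by simpa [hcd] using hcons⟩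
          obtain ⟨h₁, h₂⟩ := hcd
          simp [invRev, h₁, h₂]
        · exact ⟨[c], p₂, d :: q₂, rfl, rfl, by simpa [hcd] using hcons⟩
    · have hcd : ¬ (c.1 = d.1 ∧ c.2 = !d.2) := by
        rintro ⟨h₁, h₂⟩
        simpa [h₂] using (isReduced_cons_cons.1 hp).1 h₁
      exact ⟨c :: d :: p₁, p₂, q₂, rfl, rfl, by simpa [hcd] using hcons⟩

theorem prefix_toWord_mul {g h : FreeGroup α} {u m v : List (α × Bool)}
    (hg : g.toWord = u ++ m ++ invRev v) (hh : ¬ v <+: h.toWord) : u <+: (g * h).toWord := by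
  obtain ⟨p₁, p₂, q₂, hp, hq, hred⟩ := exists_reduce_append_eq (isReduced_toWord (x := g))
    (isReduced_toWord (x := h))
  rw [toWord_mul, hred]
  have hlen : u.length + (m.length + v.length) = p₁.length + p₂.length := by
    simpa using congrArg List.length (hg.symm.trans hp)
  by_cases hv : v.length ≤ p₂.length
  · refine absurd ?_ hh
    have hsuffix : invRev v <:+ p₂ := List.suffix_of_suffix_length_le
      (hg ▸ List.suffix_append _ _) (hp ▸ List.suffix_append _ _) (by simpa using hv)
    have hprefix : invRev (invRev v) <+: invRev p₂ := List.reverse_prefix.2 (hsuffix.map _)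
    rw [invRev_invRev] at hprefix
    exact hprefix.trans (hq ▸ List.prefix_append _ _)
  · have hu : u <+: p₁ := List.prefix_of_prefix_length_le
      (hg ▸ (List.prefix_append _ _).trans (List.prefix_append _ _))
      (hp ▸ List.prefix_append _ _) (by omega)
    exact hu.trans (List.prefix_append _ _)

theorem injective_lift_of_prefix_code {ι : Type u} [Nontrivial ι] (g : ι → FreeGroup α)
    (w : Bool → ι → List (α × Bool))
    (hg : ∀ i, ∃ m, (g i).toWord = w true i ++ m ++ invRev (w false i))
    (hw : ∀ e e' i i' r r', w e i ++ r = w e' i' ++ r' → e = e' ∧ i = i') :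
    Function.Injective (lift g) := by
  let P (e : Bool) (i : ι) : Set (FreeGroup α) := {h | w e i <+: h.toWord}
  have disjoint_P {e e' i i'} (hne : ¬ (e = e' ∧ i = i')) : Disjoint (P e i) (P e' i') := by
    exact Set.disjoint_left.2 fun h ⟨r, hr⟩ ⟨r', hr'⟩ =>
      hne (hw e e' i i' r r' (hr.trans hr'.symm))
  refine injective_lift_of_ping_pong g (P true) (P false) (fun i => ?_)
    (fun i j hij => disjoint_P (by simp [hij])) (fun i j hij => disjoint_P (by simp [hij]))
    (fun i j => disjoint_P (by simp)) (fun i => ?_) (fun i => ?_)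
  · obtain ⟨m, hm⟩ := hg i
    exact ⟨g i, m ++ invRev (w false i), by simp [hm]⟩
  · rintro _ ⟨h, hh, rfl⟩
    obtain ⟨m, hm⟩ := hg i
    exact prefix_toWord_mul hm hh
  · rintro _ ⟨h, hh, rfl⟩
    obtain ⟨m, hm⟩ := hg i
    have hinv : (g i)⁻¹.toWord = w false i ++ invRev m ++ invRev (w true i) := by
      simp [toWord_inv, hm, invRev_append, invRev_invRev]
    exact prefix_toWord_mul hinv hh

end FreeGroup

namespace Stmt16

open List FreeGroup

local notation "x₊" => ((0 : Fin 2), true)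
local notation "x₋" => ((0 : Fin 2), false)
local notation "y₊" => ((1 : Fin 2), true)
local notation "y₋" => ((1 : Fin 2), false)

/-- `codeword k true s` and `codeword k false s` are the words `uₛ` and `vₛ` above. -/
def codeword (k : ℕ) : Bool → ℕ → List (Fin 2 × Bool)
  | true, s =>
    if s ≤ k then replicate s x₊ ++ [y₊]
    else (replicate (s - k - 1) [y₋, x₋]).flatten ++ y₋ :: replicate k x₊
  | false, s =>
    if s ≤ k then replicate (s - 1) x₋ ++ [y₋, y₋]
    else if s = k + 1 then replicate k x₋ ++ [y₋]
    else (replicate (s - k - 1) [y₋, x₋]).flatten ++ replicate k x₋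

def leadingCount {γ : Type*} [DecidableEq γ] (c : γ) : List γ → ℕ
  | [] => 0
  | d :: l => if d = c then leadingCount c l + 1 else 0

/-- `t` counts the blocks `y⁻¹x⁻¹` read so far. -/
def decodeBlocks (k : ℕ) : ℕ → List (Fin 2 × Bool) → Option (Bool × ℕ)
  | t, y₋ :: x₋ :: l => decodeBlocks k (t + 1) l
  | t, y₋ :: x₊ :: _ => some (true, k + 1 + t)
  | 0, y₋ :: y₋ :: _ => some (false, 1)
  | t, x₋ :: _ => some (false, k + 1 + t)
  | _, _ => none

def decode (k : ℕ) : List (Fin 2 × Bool) → Option (Bool × ℕ)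
  | x₊ :: l => some (true, leadingCount x₊ l + 1)
  | x₋ :: l => some (false, leadingCount x₋ l + 2)
  | l => decodeBlocks k 0 l

theorem leadingCount_replicate_append {γ : Type*} [DecidableEq γ] {c d : γ} (hd : d ≠ c)
    (m : ℕ) (l : List γ) :
    leadingCount c (replicate m c ++ d :: l) = m := by
  induction m with
  | zero => simp [leadingCount, hd]
  | succ m ih => simp [leadingCount, replicate_succ, ih]

theorem decodeBlocks_flatten_append (k t u : ℕ) (l : List (Fin 2 × Bool)) :
    decodeBlocks k t ((replicate u [y₋, x₋]).flatten ++ l) = decodeBlocks k (t + u) l := by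
  induction u generalizing t with
  | zero => rfl
  | succ u ih =>
    rw [replicate_succ, flatten_cons, Nat.add_succ, ← Nat.succ_add]
    exact ih (t + 1)

theorem decode_flatten_append (k t : ℕ) (l : List (Fin 2 × Bool)) :
    decode k ((replicate t [y₋, x₋]).flatten ++ y₋ :: l) = decodeBlocks k t (y₋ :: l) := by
  calc decode k _ = decodeBlocks k 0 ((replicate t [y₋, x₋]).flatten ++ y₋ :: l) := by
        cases t <;> rfl
    _ = _ := by rw [decodeBlocks_flatten_append, Nat.zero_add]

theorem decode_codeword {k s : ℕ} (hk : 1 ≤ k) (hs : 1 ≤ s) (e : Bool)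
    (r : List (Fin 2 × Bool)) :
    decode k (codeword k e s ++ r) = some (e, s) := by
  obtain ⟨k, rfl⟩ : ∃ k', k = k' + 1 := ⟨k - 1, by omega⟩
  obtain ⟨s, rfl⟩ : ∃ s', s = s' + 1 := ⟨s - 1, by omega⟩
  cases e with
  | true =>
    by_cases hsk : s + 1 ≤ k + 1
    · simp [codeword, hsk, decode, replicate_succ, leadingCount_replicate_append]
    · obtain ⟨t, rfl⟩ : ∃ t, s = k + 1 + t := ⟨s - k - 1, by omega⟩
      simp only [codeword, if_neg hsk, show k + 1 + t + 1 - (k + 1) - 1 = t by omega]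
      simp +arith [decode_flatten_append, decodeBlocks, replicate_succ]
  | false =>
    rcases lt_trichotomy s (k + 1) with hsk | rfl | hsk
    · cases s with
      | zero => rfl
      | succ s => simp [codeword, show s + 2 ≤ k + 1 by omega, decode, replicate_succ,
          leadingCount_replicate_append]
    · simp [codeword, decode, replicate_succ, leadingCount_replicate_append]
    · obtain ⟨t, rfl⟩ : ∃ t, s = k + 1 + (t + 1) := ⟨s - k - 2, by omega⟩
      simp only [codeword, show ¬ k + 1 + (t + 1) + 1 ≤ k + 1 by omega, if_false,
        show k + 1 + (t + 1) + 1 ≠ k + 1 + 1 by omega,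
        show k + 1 + (t + 1) + 1 - (k + 1) - 1 = t + 1 by omega,
        replicate_succ' (n := t) (a := [y₋, x₋]), flatten_append, append_assoc]
      simp +arith [decode_flatten_append, decodeBlocks, replicate_succ]

theorem β_of_le {k s : ℕ} (hs : 1 ≤ s) (hsk : s ≤ k) : β k s = x ^ s * y ^ 3 * x ^ (s - 1) := by
  obtain ⟨s, rfl⟩ : ∃ s', s = s' + 1 := ⟨s - 1, by omega⟩
  rw [β, if_pos hsk, Nat.add_sub_cancel]
  group

theorem β_succ {k : ℕ} (hk : 1 ≤ k) : β k (k + 1) = y⁻¹ * x ^ k * y ^ 3 * x ^ k := by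
  obtain ⟨k, rfl⟩ : ∃ k', k = k' + 1 := ⟨k - 1, by omega⟩
  rw [β, if_neg (by omega), if_pos rfl, Nat.add_sub_cancel]
  group

section ReducedWords

attribute [local simp] x y FreeGroup.of pow_mk mul_mk inv_mk FreeGroup.IsReduced
  isChain_append isChain_cons isChain_replicate_of_rel getLast?_replicate head?_replicate

theorem toWord_β_of_le {k s : ℕ} (hs : 1 ≤ s) (hsk : s ≤ k) :
    (β k s).toWord = replicate s x₊ ++ replicate 3 y₊ ++ replicate (s - 1) x₊ :=
  toWord_eq_of_eq_mk (by simp [β_of_le hs hsk]) (by simp [show s ≠ 0 by omega])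

theorem toWord_β_succ {k : ℕ} (hk : 1 ≤ k) :
    (β k (k + 1)).toWord = y₋ :: (replicate k x₊ ++ replicate 3 y₊ ++ replicate k x₊) :=
  toWord_eq_of_eq_mk (by simp [β_succ hk, invRev]) (by simp [show k ≠ 0 by omega])

theorem toWord_β_of_lt {k s : ℕ} (hk : 1 ≤ k) (hsk : k + 1 < s) :
    (β k s).toWord = (replicate (s - k - 1) [y₋, x₋]).flatten ++
      y₋ :: (replicate k x₊ ++ replicate 3 y₊ ++ replicate k x₊) ++
      (replicate (s - k - 1) [x₊, y₊]).flatten := by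
  refine toWord_eq_of_eq_mk
    (by simp [β, show ¬ s ≤ k by omega, show s ≠ k + 1 by omega, invRev]) ?_
  set M := y₋ :: (replicate k x₊ ++ replicate 3 y₊ ++ replicate k x₊)
  have ht : s - k - 1 ≠ 0 := by omega
  have hcore : IsReduced ([y₋, x₋] ++ M ++ [x₊, y₊]) := by simp [M, show k ≠ 0 by omega]
  have hright := IsReduced.append_flatten_replicate_append (L₁ := [y₋, x₋] ++ M)
    (L₂ := [x₊, y₊]) (L₃ := []) (by simp [isCyclicallyReduced_iff]) (by simpa using hcore) ht
  simpa using IsReduced.append_flatten_replicate_append (L₁ := []) (L₂ := [y₋, x₋])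
    (L₃ := M ++ _) (by simp [isCyclicallyReduced_iff]) (by simpa using hright) ht

end ReducedWords

theorem exists_toWord_β_eq {k s : ℕ} (hk : 1 ≤ k) (hs : 1 ≤ s) :
    ∃ m, (β k s).toWord = codeword k true s ++ m ++ invRev (codeword k false s) := by
  rcases lt_trichotomy s (k + 1) with hsk | rfl | hsk
  · have hsk : s ≤ k := by omega
    exact ⟨[], by simp [toWord_β_of_le hs hsk, codeword, hsk, invRev]⟩
  · exact ⟨[y₊, y₊], by simp [toWord_β_succ hk, codeword, invRev]⟩
  · refine ⟨replicate 3 y₊, ?_⟩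
    simp [toWord_β_of_lt hk hsk, codeword, show ¬ s ≤ k by omega, show s ≠ k + 1 by omega,
      invRev, map_flatten, reverse_flatten]

theorem stmt_16_general (k n : ℕ) (hk : 2 ≤ k) (hn : k ≤ n) :
    Function.Injective (FreeGroup.lift fun i : Fin n => β k ((i : ℕ) + 1)) := by
  have : Nontrivial (Fin n) := Fin.nontrivial_iff_two_le.2 (hk.trans hn)
  refine injective_lift_of_prefix_code _ (fun e i => codeword k e (i + 1))
    (fun i => exists_toWord_β_eq (by omega) (by omega)) fun e e' i i' r r' h => ?_
  have hdecode := congrArg (decode k) h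
  rw [decode_codeword (by omega) (by omega), decode_codeword (by omega) (by omega)] at hdecode
  obtain ⟨rfl, hii'⟩ := Prod.mk.inj (Option.some.inj hdecode)
  exact ⟨rfl, Fin.ext (by omega)⟩

theorem stmt_16 (k n : ℕ) (hk : 2 ≤ k) (heven : Even k) (hn : k ≤ n) :
    Function.Injective (FreeGroup.lift fun i : Fin n => β k ((i : ℕ) + 1)) :=
  stmt_16_general k n hk hn

end Stmt16
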